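/- arXiv:2605.04379 — 5 statements merged into one kernel-verified Lean document; each statement's English description precedes it below -/
import Mathlib

section
/- For n = sm + s − ℓ with 0 < ℓ ≤ s, the family P(m,s,ℓ) = {P ⊆ [n] : |P| + |P ∩ [ℓ−1]| ≥ m+1} contains no s pairwise disjoint sets. -/
/-- `F` has no `s` pairwise disjoint members. -/
def NoMatching (F : Finset (Finset ℕ)) (s : ℕ) : Prop :=
  ∀ M ⊆ F, (M : Set (Finset ℕ)).PairwiseDisjoint id → M.card < s

/-- The family `P(m,s,ℓ) = {P ⊆ [n] : |P| + |P ∩ [ℓ-1]| ≥ m+1}`. -/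
def Pfam (n m ℓ : ℕ) : Finset (Finset ℕ) :=
  (Finset.Icc 1 n).powerset.filter
    (fun P => m + 1 ≤ P.card + (P ∩ Finset.Icc 1 (ℓ - 1)).card)

theorem stmt4 (n s m ℓ : ℕ) (hs : 2 ≤ s) (hm : 1 ≤ m)
    (hl : 1 ≤ ℓ) (hls : ℓ ≤ s) (hn : n = s * m + s - ℓ) :
    NoMatching (Pfam n m ℓ) s := by
  intro M hM hdisj
  by_contra h
  push_neg at h
  have hdisj' : ∀ x ∈ M, ∀ y ∈ M, x ≠ y → Disjoint x y := by
    intro x hx y hy hxy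
    exact hdisj hx hy hxy
  have h1 : ∀ P ∈ M, m + 1 ≤ P.card + (P ∩ Finset.Icc 1 (ℓ - 1)).card := fun P hP =>
    (Finset.mem_filter.1 (hM hP)).2
  have hsub : ∀ P ∈ M, P ⊆ Finset.Icc 1 n := fun P hP =>
    Finset.mem_powerset.1 (Finset.mem_filter.1 (hM hP)).1
  have hsum : M.card * (m + 1) ≤
      ∑ P ∈ M, P.card + ∑ P ∈ M, (P ∩ Finset.Icc 1 (ℓ - 1)).card := by
    rw [← Finset.sum_add_distrib]
    calc M.card * (m + 1) = ∑ _P ∈ M, (m + 1) := by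
          rw [Finset.sum_const, smul_eq_mul]
      _ ≤ _ := Finset.sum_le_sum h1
  have hA : ∑ P ∈ M, P.card ≤ n := by
    have := Finset.card_biUnion hdisj' (t := id)
    simp only [id] at this
    rw [← this]
    calc (M.biUnion id).card ≤ (Finset.Icc 1 n).card :=
          Finset.card_le_card (Finset.biUnion_subset.2 hsub)
      _ = n := by rw [Nat.card_Icc]; omega
  have hB : ∑ P ∈ M, (P ∩ Finset.Icc 1 (ℓ - 1)).card ≤ ℓ - 1 := by
    have hd2 : ∀ x ∈ M, ∀ y ∈ M, x ≠ y →
        Disjoint (x ∩ Finset.Icc 1 (ℓ - 1)) (y ∩ Finset.Icc 1 (ℓ - 1)) := by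
      intro x hx y hy hxy
      exact (hdisj' x hx y hy hxy).mono Finset.inter_subset_left Finset.inter_subset_left
    rw [← Finset.card_biUnion hd2]
    calc (M.biUnion fun P => P ∩ Finset.Icc 1 (ℓ - 1)).card
          ≤ (Finset.Icc 1 (ℓ - 1)).card :=
          Finset.card_le_card (Finset.biUnion_subset.2 fun P _ => Finset.inter_subset_right)
      _ = ℓ - 1 := by rw [Nat.card_Icc]; omega
  have hcard : s * (m + 1) ≤ M.card * (m + 1) := Nat.mul_le_mul_right _ h
  have key : s * (m + 1) ≤ n + (ℓ - 1) := by omega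
  have e1 : s * (m + 1) = s * m + s := by ring
  have hsm : ℓ ≤ s * m + s := le_trans hls (by nlinarith)
  rw [hn, e1] at key
  set K := s * m with hK
  omega
end

section
/- Let n ≥ ks and let F ⊆ 2^[n] be a family of k-element sets with no s pairwise disjoint members. If n = ks + t with t ≥ 0, then the number of k-element subsets of [n] NOT in F is at least (1 + t/k)·C(n−1, k−1). -/
/-!
Katona's cycle method. Place the ground set on a cycle of length `n` in an arbitrary order `σ`
and look at the `n` arcs of `k` consecutive elements. If fewer than `k + t` arcs were missing
from `F`, one could delete `t` positions so that fewer than `k` starts of missing arcs remain,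
and among the remaining `ks` positions, taken in cyclic order, every `k`-th one from a suitable
residue class mod `k` starts an arc of `F`; these `s` arcs are pairwise disjoint. So every order
misses at least `k + t` arcs. Since `Perm (Fin n)` acts transitively on `k`-sets, every `k`-set
is an arc for equally many pairs (order, start), and averaging gives
`(k + t) · C(n, k) ≤ n · #(missing k-sets)`, which is the claim because `k C(n, k) = n C(n-1, k-1)`.
-/

open Finset

section CyclicWindow

variable {n : ℕ}

/-- The cyclic interval `{i, i + 1, …, i + k - 1}` of `ℤ/n`. -/
def cyclicWindow (k : ℕ) (i : Fin n) : Finset (Fin n) := {x | ((x - i : Fin n) : ℕ) < k}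

lemma mem_cyclicWindow {k : ℕ} {i x : Fin n} :
    x ∈ cyclicWindow k i ↔ ((x - i : Fin n) : ℕ) < k := by
  simp [cyclicWindow]

lemma self_mem_cyclicWindow [NeZero n] {k : ℕ} (hk : 0 < k) (i : Fin n) :
    i ∈ cyclicWindow k i := by
  simpa [mem_cyclicWindow] using hk

lemma card_cyclicWindow [NeZero n] {k : ℕ} (hk : k ≤ n) (i : Fin n) :
    #(cyclicWindow k i) = k :=
  calc #(cyclicWindow k i) = #{x : Fin n | (x : ℕ) < k} :=
        card_nbij' (· - i) (· + i) (fun x hx => by simpa [mem_cyclicWindow] using hx)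
          (fun x hx => by simpa [mem_cyclicWindow] using hx) (fun x _ => by simp)
          (fun x _ => by simp)
    _ = k := by rw [Fin.card_filter_val_lt, min_eq_right hk]

lemma disjoint_cyclicWindow [NeZero n] {k : ℕ} {u v : Fin n} (h₁ : k ≤ ((v - u : Fin n) : ℕ))
    (h₂ : ((v - u : Fin n) : ℕ) + k ≤ n) : Disjoint (cyclicWindow k u) (cyclicWindow k v) := by
  refine disjoint_left.mpr fun x hxu hxv => ?_
  rw [mem_cyclicWindow] at hxu hxv
  have hsplit : x - u = (v - u) + (x - v) := by abel
  rw [hsplit, Fin.val_add, Nat.mod_eq_of_lt (by omega)] at hxu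
  omega

lemma sub_le_val_sub_val_of_strictMono {m : ℕ} {c : Fin m → Fin n} (hc : StrictMono c)
    {p q : Fin m} (hpq : p ≤ q) : (q : ℕ) - p ≤ (c q : ℕ) - c p := by
  have h := card_le_card_of_injOn c (s := Icc p q) (t := Icc (c p) (c q))
    (fun x hx => by
      simp only [coe_Icc, Set.mem_Icc] at hx ⊢
      exact ⟨hc.monotone hx.1, hc.monotone hx.2⟩)
    hc.injective.injOn
  simp only [Fin.card_Icc] at h
  have := Fin.le_iff_val_le_val.mp hpq
  have := Fin.le_iff_val_le_val.mp (hc.monotone hpq)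
  omega

lemma val_sub_val_le_of_strictMono {m : ℕ} {c : Fin m → Fin n} (hc : StrictMono c)
    {p q : Fin m} (hpq : p ≤ q) : (c q : ℕ) - c p + m ≤ n + ((q : ℕ) - p) := by
  have h := card_le_card_of_injOn c (s := (Icc p q)ᶜ) (t := (Icc (c p) (c q))ᶜ)
    (fun x hx => by
      simp only [coe_compl, coe_Icc, Set.mem_compl_iff, Set.mem_Icc, not_and_or, not_le] at hx ⊢
      exact hx.imp (fun h => hc h) (fun h => hc h))
    hc.injective.injOn
  simp only [card_compl, Fin.card_Icc, Fintype.card_fin] at h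
  have := Fin.le_iff_val_le_val.mp hpq
  have := Fin.le_iff_val_le_val.mp (hc.monotone hpq)
  have := q.isLt
  have := (c q).isLt
  omega

lemma disjoint_cyclicWindow_of_strictMono [NeZero n] {k m : ℕ} {c : Fin m → Fin n}
    (hc : StrictMono c) {p q : Fin m} (hpq : p ≤ q) (h₁ : k ≤ (q : ℕ) - p)
    (h₂ : (q : ℕ) - p + k ≤ m) : Disjoint (cyclicWindow k (c p)) (cyclicWindow k (c q)) := by
  have hsub : ((c q - c p : Fin n) : ℕ) = c q - c p := Fin.coe_sub_iff_le.mpr (hc.monotone hpq)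
  have := sub_le_val_sub_val_of_strictMono hc hpq
  have := val_sub_val_le_of_strictMono hc hpq
  have := q.isLt
  exact disjoint_cyclicWindow (by omega) (by omega)

lemma disjoint_cyclicWindow_of_strictMono_of_mod_eq [NeZero n] {k s : ℕ}
    {c : Fin (k * s) → Fin n} (hc : StrictMono c) {p q : Fin (k * s)} (hpq : p < q)
    (hmod : (p : ℕ) % k = q % k) : Disjoint (cyclicWindow k (c p)) (cyclicWindow k (c q)) := by
  have hpq' : (p : ℕ) < q := hpq
  obtain ⟨d, hd⟩ : k ∣ (q : ℕ) - p :=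
    Nat.dvd_of_mod_eq_zero (Nat.sub_mod_eq_zero_of_mod_eq hmod.symm)
  have hd_pos : 0 < d := Nat.pos_of_ne_zero fun h => by simp [h] at hd; omega
  have hd_lt : d < s := Nat.lt_of_mul_lt_mul_left (a := k) (by have := q.isLt; omega)
  refine disjoint_cyclicWindow_of_strictMono hc hpq.le ?_ ?_ <;> rw [hd]
  · exact Nat.le_mul_of_pos_right k hd_pos
  · simpa [Nat.mul_add] using Nat.mul_le_mul_left k (Nat.succ_le_of_lt hd_lt)

lemma exists_card_eq_card_sdiff_lt {α : Type*} [Fintype α] [DecidableEq α] {k t : ℕ}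
    (hk : 0 < k) (ht : t ≤ Fintype.card α) (B : Finset α) (hB : #B < k + t) :
    ∃ D : Finset α, #D = t ∧ #(B \ D) < k := by
  rcases le_total t #B with h | h
  · obtain ⟨D, hDB, hD⟩ := exists_subset_card_eq h
    exact ⟨D, hD, by rw [card_sdiff_of_subset hDB]; omega⟩
  · obtain ⟨D, hBD, -, hD⟩ := exists_subsuperset_card_eq (subset_univ B) h (by simpa)
    exact ⟨D, hD, by simpa [sdiff_eq_empty_iff_subset.mpr hBD]⟩

lemma exists_pairwiseDisjoint_cyclicWindow [NeZero n] {k s t : ℕ} (hk : 0 < k)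
    (hn : n = k * s + t) (B : Finset (Fin n)) (hB : #B < k + t) :
    ∃ Y : Finset (Fin n), #Y = s ∧ Disjoint Y B ∧
      (Y : Set (Fin n)).PairwiseDisjoint (cyclicWindow k) := by
  obtain ⟨D, hD, hBD⟩ := exists_card_eq_card_sdiff_lt hk (by simp; omega) B hB
  have hC : #Dᶜ = k * s := by rw [card_compl, Fintype.card_fin]; omega
  set c := Dᶜ.orderEmbOfFin hC
  have hbad : #{p : Fin (k * s) | c p ∈ B} < k := by
    refine (card_le_card_of_injOn c (t := B \ D) (fun p hp => ?_) c.injective.injOn).trans_lt hBD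
    simp only [coe_filter, mem_univ, true_and, Set.mem_ofPred_eq] at hp
    simpa [hp] using mem_compl.mp (Dᶜ.orderEmbOfFin_mem hC p)
  obtain ⟨a, ha, haI⟩ := exists_mem_notMem_of_card_lt_card
    (s := image (fun p : Fin (k * s) => (p : ℕ) % k) {p | c p ∈ B}) (t := range k)
    (by rw [card_range]; exact card_image_le.trans_lt hbad)
  rw [mem_range] at ha
  have hidx : ∀ j : Fin s, a + j * k < k * s := fun j => by
    have : ((j : ℕ) + 1) * k ≤ s * k := Nat.mul_le_mul_right _ j.isLt
    nlinarith
  let idx : Fin s → Fin (k * s) := fun j => ⟨a + j * k, hidx j⟩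
  have hidx_mod : ∀ j, (idx j : ℕ) % k = a := fun j => by
    simp [idx, Nat.add_mul_mod_self_right, Nat.mod_eq_of_lt ha]
  have hidx_mono : StrictMono idx := fun i j hij =>
    Fin.lt_def.mpr (Nat.add_lt_add_left (Nat.mul_lt_mul_of_pos_right hij hk) a)
  refine ⟨univ.image (c ∘ idx), ?_, ?_, ?_⟩
  · rw [card_image_of_injective _ (c.injective.comp hidx_mono.injective), card_univ,
      Fintype.card_fin]
  · refine disjoint_left.mpr fun y hy hyB => ?_
    obtain ⟨j, -, rfl⟩ := mem_image.mp hy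
    exact haI (mem_image.mpr ⟨idx j, by simpa using hyB, hidx_mod j⟩)
  · rw [coe_image, Set.InjOn.pairwiseDisjoint_image (c.injective.comp hidx_mono.injective).injOn]
    intro i _ j _ hij
    have hgap : ∀ {i j}, i < j →
        Disjoint (cyclicWindow k (c (idx i))) (cyclicWindow k (c (idx j))) := fun h =>
      disjoint_cyclicWindow_of_strictMono_of_mod_eq c.strictMono (hidx_mono h)
        ((hidx_mod _).trans (hidx_mod _).symm)
    rcases lt_or_gt_of_ne hij with h | h
    · exact hgap h
    · exact (hgap h).symm

lemma le_card_filter_image_cyclicWindow_notMem [NeZero n] {k s t : ℕ} (hk : 0 < k)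
    (hn : n = k * s + t) {F : Finset (Finset ℕ)} (hF : NoMatching F s) {f : Fin n → ℕ}
    (hf : Function.Injective f) : k + t ≤ #{i | (cyclicWindow k i).image f ∉ F} := by
  by_contra! h
  obtain ⟨Y, hYs, hYB, hYdisj⟩ := exists_pairwiseDisjoint_cyclicWindow hk hn _ h
  set arc : Fin n → Finset ℕ := fun i => (cyclicWindow k i).image f
  have harc : (Y : Set (Fin n)).PairwiseDisjoint arc :=
    fun i hi j hj hij => (disjoint_image hf).mpr (hYdisj hi hj hij)
  have hinj : Set.InjOn arc Y := by
    intro i hi j hj hij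
    by_contra hne
    have hempty := harc hi hj hne
    simp only [Function.onFun, hij, disjoint_self] at hempty
    exact (image_nonempty.mpr ⟨j, self_mem_cyclicWindow hk j⟩).ne_empty hempty
  have hsub : Y.image arc ⊆ F := by
    intro S hS
    obtain ⟨i, hi, rfl⟩ := mem_image.mp hS
    by_contra hiF
    exact disjoint_left.mp hYB hi (by simpa [arc] using hiF)
  have := hF _ hsub (by rwa [coe_image, hinj.pairwiseDisjoint_image])
  rw [card_image_of_injOn hinj, hYs] at this
  exact this.false

end CyclicWindow

open Pointwise in
theorem mul_choose_le_card_filter_powersetCard_mul_card {α ι : Type*} [Fintype α]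
    [DecidableEq α] [Fintype ι] {k m : ℕ} (W : ι → Finset α) (hW : ∀ i, #(W i) = k)
    (P : Finset α → Prop) [DecidablePred P] (hP : ∀ σ : Equiv.Perm α, m ≤ #{i | P (σ • W i)}) :
    m * (Fintype.card α).choose k ≤ #{S ∈ powersetCard k univ | P S} * Fintype.card ι := by
  set fiber : Finset α → ℕ := fun S => #{p : Equiv.Perm α × ι | p.1 • W p.2 = S}
  have hfiber : ∀ S ∈ powersetCard k univ, ∀ T ∈ powersetCard k univ, fiber S = fiber T := by
    intro S hS T hT
    have := Set.powersetCard.isPretransitive (α := α) (n := k)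
    obtain ⟨g, hg⟩ := MulAction.exists_smul_eq (Equiv.Perm α)
      (⟨S, mem_powersetCard_univ.mp hS⟩ : Set.powersetCard α k) ⟨T, mem_powersetCard_univ.mp hT⟩
    have hgST : g • S = T := congrArg Subtype.val hg
    refine card_nbij' (fun p => (g * p.1, p.2)) (fun p => (g⁻¹ * p.1, p.2)) ?_ ?_ ?_ ?_
    · intro p hp
      simp only [coe_filter, mem_univ, true_and, Set.mem_ofPred_eq] at hp ⊢
      rw [mul_smul, hp, hgST]
    · intro p hp
      simp only [coe_filter, mem_univ, true_and, Set.mem_ofPred_eq] at hp ⊢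
      rw [mul_smul, hp, ← hgST, inv_smul_smul]
    · intro p _; simp
    · intro p _; simp
  rcases (powersetCard k (univ : Finset α)).eq_empty_or_nonempty with hempty | ⟨S₀, hS₀⟩
  · rw [← card_univ, ← card_powersetCard, hempty, card_empty, mul_zero]
    exact Nat.zero_le _
  have harc : ∀ p : Equiv.Perm α × ι, p.1 • W p.2 ∈ powersetCard k univ :=
    fun p => mem_powersetCard_univ.mpr ((card_smul_finset _ _).trans (hW _))
  have htotal : Fintype.card (Equiv.Perm α) * Fintype.card ι =
      (Fintype.card α).choose k * fiber S₀ := by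
    rw [← Fintype.card_prod, ← card_univ (α := Equiv.Perm α × ι),
      card_eq_sum_card_fiberwise (t := powersetCard k univ) fun p _ => harc p,
      sum_congr rfl fun S hS => hfiber S hS S₀ hS₀, sum_const, smul_eq_mul, card_powersetCard,
      card_univ]
  have hmissing : Fintype.card (Equiv.Perm α) * m ≤
      #{S ∈ powersetCard k univ | P S} * fiber S₀ :=
    calc Fintype.card (Equiv.Perm α) * m
        ≤ ∑ σ : Equiv.Perm α, #{i | P (σ • W i)} := by
          rw [← smul_eq_mul, ← card_univ, ← sum_const]; exact sum_le_sum fun σ _ => hP σ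
      _ = #{p : Equiv.Perm α × ι | P (p.1 • W p.2)} := by
          simp only [card_filter, Fintype.sum_prod_type]
      _ = ∑ S ∈ powersetCard k univ with P S, fiber S := by
          rw [card_eq_sum_card_fiberwise (t := {S ∈ powersetCard k univ | P S})
            fun p hp => mem_filter.mpr ⟨harc p, (mem_filter.mp hp).2⟩]
          refine sum_congr rfl fun S hS => ?_
          rw [filter_filter]
          exact congrArg card (filter_congr fun p _ =>
            and_iff_right_of_imp fun h => h ▸ (mem_filter.mp hS).2)
      _ = _ := by
          rw [sum_congr rfl fun S hS => hfiber S (mem_filter.mp hS).1 S₀ hS₀, sum_const,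
            smul_eq_mul]
  refine Nat.le_of_mul_le_mul_left ?_ (Fintype.card_pos (α := Equiv.Perm α))
  calc Fintype.card (Equiv.Perm α) * (m * (Fintype.card α).choose k)
      = Fintype.card (Equiv.Perm α) * m * (Fintype.card α).choose k := by ring
    _ ≤ #{S ∈ powersetCard k univ | P S} * fiber S₀ * (Fintype.card α).choose k :=
        Nat.mul_le_mul_right _ hmissing
    _ = _ := by rw [mul_assoc, mul_comm (fiber S₀), ← htotal]; ring

lemma card_filter_image_succ_notMem_le {n k : ℕ} {F : Finset (Finset ℕ)}
    (hF : F ⊆ (Icc 1 n).powersetCard k) :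
    #{S ∈ powersetCard k (univ : Finset (Fin n)) | S.image (fun i : Fin n => (i : ℕ) + 1) ∉ F} ≤
      n.choose k - #F := by
  have hinj : Function.Injective fun i : Fin n => (i : ℕ) + 1 :=
    (add_left_injective 1).comp Fin.val_injective
  have hcard : #((Icc 1 n).powersetCard k) = n.choose k := by simp
  rw [← hcard, ← card_sdiff_of_subset hF]
  refine card_le_card_of_injOn _ (fun S hS => ?_) (image_injective hinj).injOn
  simp only [coe_filter, Set.mem_ofPred_eq, coe_sdiff, Set.mem_sdiff, mem_coe,
    mem_powersetCard] at hS ⊢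
  refine ⟨⟨fun x hx => ?_, by rw [card_image_of_injective _ hinj, hS.1.2]⟩, hS.2⟩
  obtain ⟨i, -, rfl⟩ := mem_image.mp hx
  simp [Nat.succ_le_of_lt i.isLt]

/-- If `n = ks + t` then a family of `k`-subsets of `[n]` with no `s` pairwise
disjoint members misses at least `(1 + t/k)·C(n-1,k-1)` of the `k`-subsets
(stated multiplied through by `k`). -/
theorem stmt6 (n k s t : ℕ) (hk : 1 ≤ k) (hn : n = k * s + t)
    (F : Finset (Finset ℕ)) (hF : F ⊆ (Finset.Icc 1 n).powersetCard k)
    (hν : NoMatching F s) :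
    (k + t) * Nat.choose (n - 1) (k - 1) ≤ k * (Nat.choose n k - F.card) := by
  have hs : 0 < s := by simpa using hν ∅ (empty_subset F) (by simp)
  have hkn : k ≤ n := hn ▸ (Nat.le_mul_of_pos_right k hs).trans (Nat.le_add_right _ t)
  have : NeZero n := ⟨by omega⟩
  have hinj : Function.Injective fun i : Fin n => (i : ℕ) + 1 :=
    (add_left_injective 1).comp Fin.val_injective
  have hcount := mul_choose_le_card_filter_powersetCard_mul_card (cyclicWindow k)
    (card_cyclicWindow hkn) (fun S => S.image (fun i : Fin n => (i : ℕ) + 1) ∉ F) fun σ => by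
      simpa only [smul_finset_def, Equiv.Perm.smul_def, image_image] using
        le_card_filter_image_cyclicWindow_notMem hk hn hν (hinj.comp σ.injective)
  rw [Fintype.card_fin] at hcount
  have hbinom : k * n.choose k = n * (n - 1).choose (k - 1) := by
    obtain ⟨n, rfl⟩ : ∃ n', n = n' + 1 := ⟨n - 1, by omega⟩
    obtain ⟨k, rfl⟩ : ∃ k', k = k' + 1 := ⟨k - 1, by omega⟩
    rw [mul_comm, ← Nat.add_one_mul_choose_eq]; rfl
  refine Nat.le_of_mul_le_mul_left ?_ (show 0 < n by omega)
  calc n * ((k + t) * (n - 1).choose (k - 1)) = k * ((k + t) * n.choose k) := by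
        rw [← mul_assoc, mul_comm n, mul_assoc, ← hbinom]; ring
    _ ≤ k * (n * (n.choose k - #F)) := by
        refine Nat.mul_le_mul_left k (hcount.trans ?_)
        rw [mul_comm n]
        exact Nat.mul_le_mul_right n (card_filter_image_succ_notMem_le hF)
    _ = n * (k * (n.choose k - #F)) := by ring
end

section
/- Let n = sm + s − ℓ with ℓ ≥ 2, m ≥ 2, and s ≥ (3/2)ℓ + m. Then C(n − m − ℓ + 1, m − 1) > (ℓ/2)·Σ_{i=1}^{m−1} C(n−1, i−1). -/
/-! Write `N = n - 1 = a + d` with `a = n - m - ℓ + 1`, `d = m + ℓ - 2`, and `k = m - 1`.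
Below `C(N, k)` the binomial coefficients decay geometrically with ratio at most `k / (N + 1 - k)`,
so `∑_{i<k} C(N, i) ≤ k C(N, k) / (N + 1 - 2k)`. On the other hand
`C(a + d, k) / C(a, k) = ∏_{i<k} (a + d - i) / (a - i) ≤ (1 + d / c)^k ≤ exp (k d / c)`
with `c = a + 1 - k`, and the hypotheses force `k d ≤ c`, so this ratio is below `3`.
The claim then reduces to `3 ℓ k < 2 (N + 1 - 2k)`, which again follows from `2s ≥ 3ℓ + 2m`. -/

open Finset

theorem Nat.sum_range_choose_mul_le (N k : ℕ) :
    (∑ i ∈ range k, N.choose i) * (N + 1 - 2 * k) ≤ N.choose k * k := by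
  induction k with
  | zero => simp
  | succ k ih =>
    rcases Nat.lt_or_ge N (2 * k + 2) with hN | hN
    · simp [show N + 1 - 2 * (k + 1) = 0 by omega]
    have hnext := Nat.choose_succ_right_eq N k
    calc (∑ i ∈ range (k + 1), N.choose i) * (N + 1 - 2 * (k + 1))
        ≤ (∑ i ∈ range k, N.choose i) * (N + 1 - 2 * k) + N.choose k * (N - 1 - 2 * k) := by
          rw [sum_range_succ, add_mul, show N + 1 - 2 * (k + 1) = N - 1 - 2 * k by omega]
          gcongr
          omega
      _ ≤ N.choose k * (N - k) := by
          rw [show N - k = k + (N - 1 - 2 * k) + 1 by omega]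
          nlinarith
      _ = N.choose (k + 1) * (k + 1) := hnext.symm

theorem Nat.choose_add_mul_pow_le {a c k : ℕ} (d : ℕ) (hc : c + k ≤ a + 1) :
    (a + d).choose k * c ^ k ≤ a.choose k * (c + d) ^ k := by
  have hfactor : ∀ i ∈ range k, (a + d - i) * c ≤ (a - i) * (c + d) := by
    intro i hi
    have hik := mem_range.mp hi
    rw [show a + d - i = a - i + d by omega]
    nlinarith [show c ≤ a - i by omega]
  have hprod := prod_le_prod' hfactor
  rw [prod_mul_distrib, prod_mul_distrib, prod_const, prod_const, card_range,
    ← descFactorial_eq_prod_range, ← descFactorial_eq_prod_range,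
    descFactorial_eq_factorial_mul_choose, descFactorial_eq_factorial_mul_choose,
    mul_assoc, mul_assoc] at hprod
  exact Nat.le_of_mul_le_mul_left hprod k.factorial_pos

theorem Nat.add_pow_lt_three_mul_pow {c d k : ℕ} (hc : 0 < c) (hkd : k * d ≤ c) :
    (c + d) ^ k < 3 * c ^ k := by
  have hc' : (0 : ℝ) < c := by exact_mod_cast hc
  have hexp : ((c + d : ℕ) : ℝ) ^ k ≤ Real.exp (k * d / c) * (c : ℝ) ^ k := by
    calc ((c + d : ℕ) : ℝ) ^ k = (1 + d / c) ^ k * (c : ℝ) ^ k := by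
          rw [← mul_pow]; push_cast; field_simp
      _ ≤ Real.exp (d / c) ^ k * (c : ℝ) ^ k := by
          gcongr
          linarith [Real.add_one_le_exp (d / c : ℝ)]
      _ = Real.exp (k * d / c) * (c : ℝ) ^ k := by
          rw [← Real.exp_nat_mul, mul_div_assoc]
  have hle : Real.exp (k * d / c) ≤ Real.exp 1 := by
    gcongr
    rw [div_le_one hc']
    exact_mod_cast hkd
  have hreal : ((c + d : ℕ) : ℝ) ^ k < 3 * (c : ℝ) ^ k := by
    calc _ ≤ Real.exp 1 * (c : ℝ) ^ k := hexp.trans (by gcongr)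
      _ < 3 * (c : ℝ) ^ k := by gcongr; exact Real.exp_one_lt_three
  exact_mod_cast hreal

theorem Nat.choose_add_le_three_mul_choose {a d k : ℕ} (hk : k ≤ a) (hkd : k * d ≤ a + 1 - k) :
    (a + d).choose k ≤ 3 * a.choose k := by
  have hc : 0 < a + 1 - k := by omega
  have hpow := add_pow_lt_three_mul_pow hc hkd
  have hscaled : (a + d).choose k * (a + 1 - k) ^ k ≤ 3 * a.choose k * (a + 1 - k) ^ k := by
    calc _ ≤ a.choose k * (a + 1 - k + d) ^ k := choose_add_mul_pow_le d (by omega)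
      _ ≤ a.choose k * (3 * (a + 1 - k) ^ k) := by gcongr
      _ = 3 * a.choose k * (a + 1 - k) ^ k := by ring
  exact Nat.le_of_mul_le_mul_right hscaled (pow_pos hc k)

theorem Nat.mul_sum_range_choose_lt {a d k ℓ : ℕ} (hk : k ≤ a) (hkd : k * d ≤ a + 1 - k)
    (hℓ : 3 * ℓ * k < 2 * (a + d + 1 - 2 * k)) :
    ℓ * ∑ i ∈ range k, (a + d).choose i < 2 * a.choose k := by
  have hsum := sum_range_choose_mul_le (a + d) k
  have hchoose := choose_add_le_three_mul_choose hk hkd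
  have hpos : 0 < a.choose k := choose_pos hk
  have hscaled : ℓ * (∑ i ∈ range k, (a + d).choose i) * (a + d + 1 - 2 * k)
      < 2 * a.choose k * (a + d + 1 - 2 * k) := by
    calc _ ≤ ℓ * ((a + d).choose k * k) := by rw [mul_assoc]; gcongr
      _ ≤ ℓ * (3 * a.choose k * k) := by gcongr
      _ = 3 * ℓ * k * a.choose k := by ring
      _ < 2 * (a + d + 1 - 2 * k) * a.choose k := by gcongr
      _ = _ := by ring
  exact Nat.lt_of_mul_lt_mul_right hscaled

theorem stmt9_general (n s m ℓ : ℕ) (hm : 2 ≤ m)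
    (hs : 3 * ℓ + 2 * m ≤ 2 * s) (hn : n = s * m + s - ℓ) :
    ℓ * ∑ i ∈ Finset.Icc 1 (m - 1), Nat.choose (n - 1) (i - 1)
      < 2 * Nat.choose (n - m - ℓ + 1) (m - 1) := by
  obtain ⟨k, rfl⟩ : ∃ k, m = k + 1 := ⟨m - 1, by omega⟩
  have hsize : 3 * (ℓ * k) + 4 * ℓ + 2 * k ^ 2 + 6 * k + 4 ≤ 2 * n := by
    have hexpand : s * (k + 2) = s * (k + 1) + s := by ring
    have hnℓ : n + ℓ = s * (k + 2) := by omega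
    nlinarith
  have hsum : ∑ i ∈ Icc 1 (k + 1 - 1), (n - 1).choose (i - 1)
      = ∑ i ∈ range k, (n - (k + 1) - ℓ + 1 + (k + ℓ - 1)).choose i := by
    rw [show n - (k + 1) - ℓ + 1 + (k + ℓ - 1) = n - 1 by omega, Nat.add_sub_cancel,
      ← Finset.Ico_add_one_right_eq_Icc, sum_Ico_eq_sum_range]
    simp
  rw [hsum, Nat.add_sub_cancel]
  apply Nat.mul_sum_range_choose_lt
  · omega
  · have hkd : k * (k + ℓ - 1) ≤ k ^ 2 + ℓ * k :=
      (Nat.mul_le_mul_left k (Nat.sub_le (k + ℓ) 1)).trans_eq (by ring)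
    omega
  · rw [mul_assoc]
    omega

/-- For `n = sm + s - ℓ`, `ℓ ≥ 2`, `m ≥ 2` and `s ≥ (3/2)ℓ + m`,
`C(n-m-ℓ+1, m-1) > (ℓ/2)·Σ_{i=1}^{m-1} C(n-1,i-1)`
(stated multiplied through by `2`). -/
theorem stmt9 (n s m ℓ : ℕ) (hl : 2 ≤ ℓ) (hm : 2 ≤ m)
    (hs : 3 * ℓ + 2 * m ≤ 2 * s) (hn : n = s * m + s - ℓ) :
    ℓ * ∑ i ∈ Finset.Icc 1 (m - 1), Nat.choose (n - 1) (i - 1)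
      < 2 * Nat.choose (n - m - ℓ + 1) (m - 1) :=
  stmt9_general n s m ℓ hm hs hn
end

section
/- Let n ≥ sk and let F_1, ..., F_s be families of k-element subsets of [n] that are cross-dependent (there is no choice of pairwise disjoint sets F_1 ∈ F_1, ..., F_s ∈ F_s). Then Σ_{i=1}^{s} |F_i| ≤ (s−1)·C(n,k). -/
/-!
Katona-style averaging over permutations. Fix pairwise disjoint `k`-sets `B₁, …, B_s`. For
every permutation `σ` the sets `σ B_i` are again pairwise disjoint, so cross-dependence allows at
most `s - 1` of the events `σ B_i ∈ F_i`. On the other hand `σ B_i` is uniformly distributed over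
the `k`-sets, so the event `σ B_i ∈ F_i` holds for a proportion `|F_i| / C(n, k)` of all
permutations. Summing over `i` gives `Σ |F_i| / C(n, k) ≤ s - 1`.
-/

open Finset Equiv Function
open scoped Nat Pointwise

namespace MulAction

variable {G X : Type*} [Group G] [Fintype G] [MulAction G X] [DecidableEq X]

theorem card_filter_smul_smul_mem (𝒜 : Finset X) {x : X} (g₀ : G) :
    #{g : G | g • g₀ • x ∈ 𝒜} = #{g : G | g • x ∈ 𝒜} :=
  card_equiv (Equiv.mulRight g₀) (by simp [mul_smul])

theorem card_filter_smul_mem_mul_card [Fintype X] [IsPretransitive G X] (𝒜 : Finset X) (x : X) :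
    #{g : G | g • x ∈ 𝒜} * Fintype.card X = #𝒜 * Fintype.card G := by
  have hpreimage (g : G) : #{y : X | g • y ∈ 𝒜} = #𝒜 := by
    rw [← card_smul_finset g⁻¹ 𝒜]
    congr 1
    ext y
    simp [mem_inv_smul_finset_iff]
  calc #{g : G | g • x ∈ 𝒜} * Fintype.card X = ∑ y : X, #{g : G | g • y ∈ 𝒜} := by
        rw [← card_univ, mul_comm, ← smul_eq_mul, ← sum_const]
        refine sum_congr rfl fun y _ => ?_
        obtain ⟨g₀, rfl⟩ := exists_smul_eq G x y
        exact (card_filter_smul_smul_mem 𝒜 g₀).symm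
    _ = ∑ g : G, #{y : X | g • y ∈ 𝒜} :=
        (sum_card_bipartiteAbove_eq_sum_card_bipartiteBelow _).symm
    _ = #𝒜 * Fintype.card G := by simp [hpreimage, mul_comm]

end MulAction

theorem Equiv.Perm.card_filter_smul_mem_mul_choose {α : Type*} [Fintype α] [DecidableEq α]
    (B : Finset α) (𝒜 : Finset (Finset α)) (h𝒜 : ∀ A ∈ 𝒜, #A = #B) :
    #{σ : Perm α | σ • B ∈ 𝒜} * (Fintype.card α).choose #B = #𝒜 * (Fintype.card α)! := by
  classical
  have := Set.powersetCard.isPretransitive (α := α) (n := #B)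
  have key := MulAction.card_filter_smul_mem_mul_card (G := Perm α)
    (𝒜.subtype (· ∈ Set.powersetCard α #B)) ⟨B, rfl⟩
  rw [card_subtype, filter_true_of_mem (s := 𝒜) (by simpa using h𝒜), Fintype.card_eq_nat_card,
    Set.powersetCard.card, Nat.card_eq_fintype_card, Fintype.card_perm] at key
  convert key using 4
  simp

theorem Finset.exists_pairwise_disjoint_card_eq {α : Type*} [Fintype α] {s k : ℕ}
    (h : s * k ≤ Fintype.card α) :
    ∃ B : Fin s → Finset α, (∀ i, #(B i) = k) ∧ Pairwise (Disjoint on B) := by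
  obtain ⟨e⟩ := Function.Embedding.nonempty_of_card_le (α := Fin s × Fin k) (β := α)
    (by simpa using h)
  refine ⟨fun i => ({i} ×ˢ univ).map e, fun i => by simp, fun i j hij => ?_⟩
  rw [onFun, disjoint_map, disjoint_product]
  exact .inl (disjoint_singleton.mpr hij)

def CrossDependent {ι α : Type*} (𝒜 : ι → Finset (Finset α)) : Prop :=
  ¬ ∃ f : ι → Finset α, (∀ i, f i ∈ 𝒜 i) ∧ Pairwise (Disjoint on f)

theorem CrossDependent.sum_card_le {α : Type*} [Fintype α] [DecidableEq α] {s k : ℕ}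
    {𝒜 : Fin s → Finset (Finset α)} (h𝒜 : CrossDependent 𝒜) (hcard : ∀ i, ∀ A ∈ 𝒜 i, #A = k)
    (hsk : s * k ≤ Fintype.card α) :
    ∑ i, #(𝒜 i) ≤ (s - 1) * (Fintype.card α).choose k := by
  obtain ⟨B, hBcard, hBdisj⟩ := exists_pairwise_disjoint_card_eq hsk
  have hhits (σ : Perm α) : #{i | σ • B i ∈ 𝒜 i} ≤ s - 1 := by
    obtain ⟨i, hi⟩ : ∃ i, σ • B i ∉ 𝒜 i := by
      by_contra! hall
      refine h𝒜 ⟨fun i => σ • B i, hall, fun i j hij => ?_⟩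
      simpa [← disjoint_coe] using hBdisj hij
    have := card_lt_univ_of_notMem (s := {i | σ • B i ∈ 𝒜 i}) (x := i) (by simpa using hi)
    rw [Fintype.card_fin] at this
    omega
  have hcount : (∑ i, #(𝒜 i)) * (Fintype.card α)! =
      (∑ i, #{σ : Perm α | σ • B i ∈ 𝒜 i}) * (Fintype.card α).choose k := by
    rw [sum_mul, sum_mul]
    refine sum_congr rfl fun i _ => ?_
    rw [← hBcard i, Perm.card_filter_smul_mem_mul_choose]
    simpa [hBcard] using hcard i
  have hsum : ∑ i, #{σ : Perm α | σ • B i ∈ 𝒜 i} ≤ (s - 1) * (Fintype.card α)! :=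
    calc ∑ i, #{σ : Perm α | σ • B i ∈ 𝒜 i} = ∑ σ : Perm α, #{i | σ • B i ∈ 𝒜 i} :=
          sum_card_bipartiteAbove_eq_sum_card_bipartiteBelow _
      _ ≤ ∑ _σ : Perm α, (s - 1) := sum_le_sum fun σ _ => hhits σ
      _ = (s - 1) * (Fintype.card α)! := by simp [Fintype.card_perm, mul_comm]
  refine le_of_mul_le_mul_right (a := (Fintype.card α)!) ?_ (Nat.factorial_pos _)
  calc (∑ i, #(𝒜 i)) * (Fintype.card α)!
      _ ≤ (s - 1) * (Fintype.card α)! * (Fintype.card α).choose k := by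
        rw [hcount]
        gcongr
      _ = (s - 1) * (Fintype.card α).choose k * (Fintype.card α)! := by ring

theorem CrossDependent.sum_card_le_of_subset_powersetCard {β : Type*} [DecidableEq β]
    {U : Finset β} {s k : ℕ} {ℱ : Fin s → Finset (Finset β)} (hℱ : CrossDependent ℱ)
    (hU : ∀ i, ℱ i ⊆ U.powersetCard k) (hsk : s * k ≤ #U) :
    ∑ i, #(ℱ i) ≤ (s - 1) * (#U).choose k := by
  let restrict (S : Finset β) : Finset U := S.subtype (· ∈ U)
  have hrestrict {i} {S} (hS : S ∈ ℱ i) : (restrict S).map (Embedding.subtype _) = S :=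
    subtype_map_of_mem (mem_powersetCard.1 (hU i hS)).1
  have hinj (i) : Set.InjOn restrict (ℱ i) := fun S hS T hT h => by
    rw [← hrestrict hS, ← hrestrict hT, h]
  have hcross : CrossDependent fun i => (ℱ i).image restrict := by
    rintro ⟨f, hf, hdisj⟩
    refine hℱ ⟨fun i => (f i).map (Embedding.subtype _), fun i => ?_,
      fun i j hij => (disjoint_map _).2 (hdisj hij)⟩
    obtain ⟨S, hS, hSf⟩ := mem_image.1 (hf i)
    simpa only [← hSf, hrestrict hS]
  have hcard (i) : ∀ A ∈ (ℱ i).image restrict, #A = k := by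
    simp only [mem_image, forall_exists_index, and_imp]
    rintro _ S hS rfl
    rw [← card_map (Embedding.subtype _), hrestrict hS]
    exact (mem_powersetCard.1 (hU i hS)).2
  simpa [card_image_of_injOn (hinj _)] using hcross.sum_card_le hcard (by simpa using hsk)

/-- Cross-dependent averaging: if `F₁,…,F_s` are families of `k`-subsets of
`[n]`, `n ≥ sk`, with no system of pairwise disjoint representatives, then
`Σ|F_i| ≤ (s-1)·C(n,k)`. -/
theorem stmt10 (n k s : ℕ) (hn : s * k ≤ n)
    (F : Fin s → Finset (Finset ℕ))
    (hF : ∀ i, F i ⊆ (Finset.Icc 1 n).powersetCard k)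
    (hcross : ¬ ∃ f : Fin s → Finset ℕ, (∀ i, f i ∈ F i) ∧
        ∀ i j, i ≠ j → Disjoint (f i) (f j)) :
    ∑ i, (F i).card ≤ (s - 1) * Nat.choose n k := by
  have hU : #(Icc 1 n) = n := by simp
  have h := CrossDependent.sum_card_le_of_subset_powersetCard
    (fun ⟨f, hf, hdisj⟩ => hcross ⟨f, hf, fun i j hij => hdisj hij⟩) hF (by rwa [hU])
  rwa [hU] at h
end

section
/- Let n = sm + s − ℓ, and suppose F ⊆ 2^[n] has no s pairwise disjoint members and contains pairwise disjoint sets F_1,...,F_k with k ≤ ℓ and Σ|F_i| ≤ km + k − ℓ. Then the number of (m+1)-subsets of [n] not in F is at least C((m+1)(s−ℓ) − 1, m). -/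
open Finset

lemma Nat.choose_mul_succ_eq_mul_choose {r : ℕ} (hr : 0 < r) (m : ℕ) :
    (r * (m + 1)).choose (m + 1) = r * (r * (m + 1) - 1).choose m := by
  have h := Nat.add_one_mul_choose_eq (r * (m + 1) - 1) m
  rw [Nat.sub_add_cancel (Nat.mul_pos hr m.succ_pos)] at h
  apply Nat.eq_of_mul_eq_mul_right m.succ_pos
  rw [← h]
  ring

lemma Finset.powersetCard_sdiff_eq_filter_disjoint {α : Type*} [DecidableEq α]
    (k : ℕ) (Y B : Finset α) :
    (Y \ B).powersetCard k = (Y.powersetCard k).filter (Disjoint · B) := by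
  ext A
  simp only [mem_powersetCard, mem_filter, subset_sdiff]
  tauto

section PerfectMatching

variable {α : Type*} [DecidableEq α] {m : ℕ}

lemma Finset.exists_mem_powersetCard_sdiff_card_filter_disjoint_lt {r : ℕ} {Y : Finset α}
    (hY : #Y = (r + 2) * (m + 1)) {D : Finset (Finset α)} (hDY : D ⊆ Y.powersetCard (m + 1))
    (hD : #D < ((r + 2) * (m + 1) - 1).choose m) :
    ∃ A ∈ Y.powersetCard (m + 1) \ D,
      #(D.filter (Disjoint A)) < ((r + 1) * (m + 1) - 1).choose m := by
  set c := ((r + 1) * (m + 1) - 1).choose m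
  by_contra! hA
  have hc : 0 < c := Nat.choose_pos (Nat.le_sub_one_of_lt (by nlinarith))
  have hdisjointCard (B) (hB : B ∈ D) :
      #((Y.powersetCard (m + 1)).filter (Disjoint · B)) = (r + 1) * c := by
    obtain ⟨hBY, hB⟩ := mem_powersetCard.mp (hDY hB)
    rw [← powersetCard_sdiff_eq_filter_disjoint, card_powersetCard, card_sdiff_of_subset hBY,
      hY, hB, Nat.sub_eq_of_eq_add (c := (r + 1) * (m + 1)) (by ring),
      Nat.choose_mul_succ_eq_mul_choose r.succ_pos]
  have hdouble :
      ∑ A ∈ Y.powersetCard (m + 1), #(D.filter (Disjoint A)) = #D * ((r + 1) * c) := by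
    rw [← sum_const_nat hdisjointCard]
    exact sum_card_bipartiteAbove_eq_sum_card_bipartiteBelow Disjoint
  have hcount : (#(Y.powersetCard (m + 1)) - #D) * c ≤ #D * (r + 1) * c := by
    rw [mul_assoc, ← hdouble, ← card_sdiff_of_subset hDY, ← smul_eq_mul]
    exact (card_nsmul_le_sum _ _ _ hA).trans (sum_le_sum_of_subset sdiff_subset)
  rw [card_powersetCard, hY, Nat.choose_mul_succ_eq_mul_choose (by omega)] at hcount
  have := Nat.sub_le_iff_le_add.mp (Nat.le_of_mul_le_mul_right hcount hc)
  nlinarith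

/-- Frankl's bound for `|Y| = r(m + 1)`, in contrapositive form. -/
theorem Finset.exists_pairwiseDisjoint_subset_powersetCard_sdiff :
    ∀ {r : ℕ} {Y : Finset α} {D : Finset (Finset α)}, #Y = r * (m + 1) →
      D ⊆ Y.powersetCard (m + 1) → #D < (r * (m + 1) - 1).choose m →
      ∃ N ⊆ Y.powersetCard (m + 1) \ D, #N = r ∧ (N : Set (Finset α)).PairwiseDisjoint id
  | 0, _, _, _, _, _ => ⟨∅, empty_subset _, rfl, by simp⟩
  | 1, Y, D, hY, _, hD => by
    have hD : D = ∅ := by simpa using hD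
    refine ⟨{Y}, ?_, rfl, by simp⟩
    simp [hD, hY]
  | r + 2, Y, D, hY, hDY, hD => by
    obtain ⟨A, hA, hDA⟩ := exists_mem_powersetCard_sdiff_card_filter_disjoint_lt hY hDY hD
    obtain ⟨hAY, hAcard⟩ := mem_powersetCard.mp (mem_sdiff.mp hA).1
    have hYA : #(Y \ A) = (r + 1) * (m + 1) := by
      rw [card_sdiff_of_subset hAY, hY, hAcard]
      exact Nat.sub_eq_of_eq_add (by ring)
    have hDYA : D.filter (Disjoint A) ⊆ (Y \ A).powersetCard (m + 1) := by
      intro B hB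
      obtain ⟨hB, hAB⟩ := mem_filter.mp hB
      rw [powersetCard_sdiff_eq_filter_disjoint]
      exact mem_filter.mpr ⟨hDY hB, hAB.symm⟩
    obtain ⟨N, hN, hNcard, hNd⟩ :=
      exists_pairwiseDisjoint_subset_powersetCard_sdiff hYA hDYA hDA
    have hAN : ∀ B ∈ N, B ∈ Y.powersetCard (m + 1) \ D ∧ Disjoint A B := by
      intro B hB
      obtain ⟨hB, hBD⟩ := mem_sdiff.mp (hN hB)
      rw [powersetCard_sdiff_eq_filter_disjoint, mem_filter] at hB
      obtain ⟨hBY, hBA⟩ := hB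
      exact ⟨mem_sdiff.mpr ⟨hBY, fun h => hBD (mem_filter.mpr ⟨h, hBA.symm⟩)⟩, hBA.symm⟩
    have hAnotin : A ∉ N := fun h => by simp [disjoint_self.mp (hAN A h).2] at hAcard
    refine ⟨insert A N, insert_subset hA fun B hB => (hAN B hB).1, ?_,
      by simpa using hNd.insert fun B hB _ => (hAN B hB).2⟩
    rw [card_insert_of_notMem hAnotin, hNcard]

end PerfectMatching

lemma Finset.exists_subset_sdiff_biUnion_card_eq {ι α : Type*} [DecidableEq α] {I : Finset ι}
    {Z : Finset α} {G : ι → Finset α} (hG : ∀ i ∈ I, G i ⊆ Z) {t : ℕ}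
    (ht : t + ∑ i ∈ I, #(G i) ≤ #Z) : ∃ Y ⊆ Z \ I.biUnion G, #Y = t := by
  apply exists_subset_card_eq
  rw [card_sdiff_of_subset (biUnion_subset.mpr hG)]
  have := card_biUnion_le (s := I) (t := G)
  omega

lemma NoMatching.card_add_card_lt {F : Finset (Finset ℕ)} {s : ℕ} (hν : NoMatching F s)
    {ι : Type*} [Fintype ι] {G : ι → Finset ℕ} (hG : ∀ i, G i ∈ F)
    (hGinj : Function.Injective G) (hGd : Pairwise fun i j => Disjoint (G i) (G j))
    {N : Finset (Finset ℕ)} (hNF : N ⊆ F) (hN : (N : Set (Finset ℕ)).PairwiseDisjoint id)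
    (hGN : ∀ B ∈ N, Disjoint B (univ.biUnion G)) (hN0 : ∅ ∉ N) :
    Fintype.card ι + #N < s := by
  have hGiN (i : ι) (B : Finset ℕ) (hB : B ∈ N) : Disjoint (G i) B :=
    ((disjoint_biUnion_right _ _ _).mp (hGN B hB) i (mem_univ i)).symm
  have hdisj : Disjoint (univ.image G) N := disjoint_left.mpr fun A hA hAN => by
    obtain ⟨i, -, rfl⟩ := mem_image.mp hA
    exact hN0 ((disjoint_self_iff_empty _).mp (hGiN i _ hAN) ▸ hAN)
  rw [← card_univ, ← card_image_of_injective _ hGinj, ← card_union_of_disjoint hdisj]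
  refine hν _ (union_subset (image_subset_iff.mpr fun i _ => hG i) hNF) ?_
  rw [coe_union, coe_image, coe_univ, Set.image_univ]
  refine Set.PairwiseDisjoint.union (Pairwise.range_pairwise hGd) hN ?_
  rintro _ ⟨i, rfl⟩ B hB -
  exact hGiN i B hB

/-- If `F ⊆ 2^[n]`, `n = sm + s - ℓ`, has no `s` pairwise disjoint members and
contains pairwise disjoint sets `F₁,…,F_k` with `k ≤ ℓ` and
`Σ|F_i| ≤ km + k - ℓ`, then at least `C((m+1)(s-ℓ)-1, m)` of the
`(m+1)`-subsets of `[n]` are not in `F`. -/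
theorem stmt17 (n s m ℓ k : ℕ) (hls : ℓ ≤ s) (hn : n = s * m + s - ℓ)
    (F : Finset (Finset ℕ)) (hF : ∀ A ∈ F, A ⊆ Finset.Icc 1 n)
    (hν : NoMatching F s)
    (G : Fin k → Finset ℕ) (hG : ∀ i, G i ∈ F)
    (hGinj : Function.Injective G)
    (hGd : ∀ i j, i ≠ j → Disjoint (G i) (G j))
    (hk : k ≤ ℓ) (hsum : ∑ i, (G i).card + ℓ ≤ k * m + k) :
    Nat.choose ((m + 1) * (s - ℓ) - 1) m
      ≤ (((Finset.Icc 1 n).powersetCard (m + 1)).filter (fun A => A ∉ F)).card := by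
  obtain ⟨Y, hYX, hY⟩ := exists_subset_sdiff_biUnion_card_eq (I := univ)
    (fun i _ => hF _ (hG i)) (t := (s - k) * (m + 1)) <| by
      obtain ⟨r, rfl⟩ : ∃ r, s = k + r := ⟨s - k, by omega⟩
      have : (k + r) * m = k * m + r * m := by ring
      have : r * (m + 1) = r * m + r := by ring
      rw [Nat.card_Icc, Nat.add_sub_cancel_left, hn]
      omega
  by_contra! hlt
  obtain ⟨N, hN, hNcard, hNd⟩ := exists_pairwiseDisjoint_subset_powersetCard_sdiff hY
    (filter_subset (· ∉ F) _) <| calc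
      _ ≤ _ := card_le_card (filter_subset_filter _ (powersetCard_mono (hYX.trans sdiff_subset)))
      _ < _ := hlt
      _ ≤ _ := Nat.choose_le_choose _ (Nat.sub_le_sub_right (by rw [mul_comm]; gcongr) 1)
  have hNY (B) (hB : B ∈ N) : (B ⊆ Y ∧ #B = m + 1) ∧ B ∈ F := by
    obtain ⟨hBY, hBF⟩ := mem_sdiff.mp (hN hB)
    exact ⟨mem_powersetCard.mp hBY, by simpa [hBY] using hBF⟩
  have := hν.card_add_card_lt hG hGinj (fun i j => hGd i j) (fun B hB => (hNY B hB).2) hNd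
    (fun B hB => (subset_sdiff.mp ((hNY B hB).1.1.trans hYX)).2)
    (fun h => by simpa using (hNY ∅ h).1.2)
  rw [Fintype.card_fin, hNcard] at this
  omega
end
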